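/- Let μ* ∈ ℝ with |μ*| ≤ C and let μ̂^{(t)} be generated by gradient descent μ̂^{(t+1)} = μ̂^{(t)} - η·sign(μ̂^{(t)} - μ*)·e^{-(μ̂^{(t)} - μ*)²/8}/√(2π) with |μ̂^{(0)}| ≤ C. If |μ̂^{(t)} - μ*| > η, then |μ̂^{(t+1)} - μ*| < |μ̂^{(t)} - μ*|, i.e., each step of the optimal-discriminator dynamics for a single unit-variance Gaussian strictly decreases the distance to the true mean. -/
import Mathlib


open Real

/-- Each step of the optimal-discriminator dynamics for a single unit-variance
Gaussian strictly decreases the distance to the true mean. -/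
theorem single_gaussian_step_progress (C η μs μh : ℝ)
    (hμs : |μs| ≤ C) (hμh : |μh| ≤ C) (hη : 0 < η)
    (hfar : η < |μh - μs|) :
    |(μh - η * Real.sign (μh - μs) * Real.exp (-(μh - μs) ^ 2 / 8) / Real.sqrt (2 * π)) - μs|
      < |μh - μs| := by
  set d := μh - μs with hd
  have hsqrt : 1 < Real.sqrt (2 * π) := by
    rw [show (1 : ℝ) = Real.sqrt 1 by simp]
    exact Real.sqrt_lt_sqrt (by norm_num) (by nlinarith [Real.pi_gt_three])
  have hexp : Real.exp (-d ^ 2 / 8) ≤ 1 := by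
    rw [← Real.exp_zero]
    exact Real.exp_le_exp.mpr (by nlinarith [sq_nonneg d])
  have hexppos : 0 < Real.exp (-d ^ 2 / 8) := Real.exp_pos _
  set s := η * Real.exp (-d ^ 2 / 8) / Real.sqrt (2 * π) with hs
  have hspos : 0 < s := by positivity
  have hsη : s < η := by
    rw [hs, div_lt_iff₀ (by linarith)]
    nlinarith
  have hdne : d ≠ 0 := by
    intro h
    rw [h] at hfar
    simp at hfar
    linarith
  rcases lt_or_gt_of_ne hdne with hneg | hpos
  · have hsign : Real.sign d = -1 := Real.sign_of_neg hneg
    have habs : |d| = -d := abs_of_neg hneg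
    rw [habs] at hfar ⊢
    have : μh - η * Real.sign d * Real.exp (-d ^ 2 / 8) / Real.sqrt (2 * π) - μs = d + s := by
      rw [hsign, hs]; ring
    rw [this, abs_of_neg (by linarith)]
    linarith
  · have hsign : Real.sign d = 1 := Real.sign_of_pos hpos
    have habs : |d| = d := abs_of_pos hpos
    rw [habs] at hfar ⊢
    have : μh - η * Real.sign d * Real.exp (-d ^ 2 / 8) / Real.sqrt (2 * π) - μs = d - s := by
      rw [hsign, hs]; ring
    rw [this, abs_of_pos (by linarith)]
    linarith
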